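/- arXiv:2509.16448 — 2 statements merged into one kernel-verified Lean document; each statement's English description precedes it below -/
import Mathlib

section
/- For every integer n ≥ 2, the domination number of the 2-token graph of the complete graph satisfies γ(F_2(K_n)) = ⌊n/2⌋. -/
/-! Two distinct pairs are adjacent in `F₂(Kₙ)` exactly when they meet, so a set `D` of pairs
dominates iff every pair meets a member of `D`, i.e. iff the members of `D` leave at most one
point uncovered. They cover at most `2 #D` points, whence `n ≤ 2 #D + 1`; the `⌊n/2⌋` pairs
`{2i, 2i+1}` leave only `n - 1` uncovered when `n` is odd and nothing otherwise. -/

/-- The `k`-token graph of a simple graph `G`: vertices are the `k`-element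
subsets of `V(G)`, and two subsets are adjacent when their symmetric difference
is a pair `{u, v}` of adjacent vertices of `G`. -/
def tokenGraph {V : Type*} [DecidableEq V] (G : SimpleGraph V) (k : ℕ) :
    SimpleGraph {A : Finset V // A.card = k} where
  Adj A B := ∃ u v : V, G.Adj u v ∧ symmDiff A.1 B.1 = {u, v}
  symm := by
    constructor
    rintro A B ⟨u, v, huv, h⟩
    exact ⟨u, v, huv, by rwa [symmDiff_comm]⟩
  loopless := by
    constructor
    rintro A ⟨u, v, huv, h⟩
    rw [symmDiff_self] at h
    have : u ∈ (⊥ : Finset V) := h ▸ Finset.mem_insert_self u {v}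
    simp at this

/-- A dominating set: every vertex is in `D` or adjacent to a vertex of `D`. -/
def IsDominatingSet {V : Type*} (G : SimpleGraph V) (D : Set V) : Prop :=
  ∀ v : V, v ∈ D ∨ ∃ u ∈ D, G.Adj u v

/-- The domination number: minimum cardinality of a dominating set. -/
noncomputable def dominationNumber {V : Type*} [Fintype V] (G : SimpleGraph V) : ℕ :=
  sInf {m : ℕ | ∃ D : Finset V, IsDominatingSet G ↑D ∧ D.card = m}

/-- The star graph `S n` with vertex set `{0, 1, …, n}`, center `0` adjacent to
each leaf `1, …, n`. -/
def starGraph (n : ℕ) : SimpleGraph (Fin (n + 1)) where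
  Adj u v := u ≠ v ∧ (u = 0 ∨ v = 0)
  symm := by constructor; rintro u v ⟨h1, h2⟩; exact ⟨h1.symm, h2.symm⟩
  loopless := by constructor; rintro u ⟨h1, _⟩; exact h1 rfl

open Finset
open scoped symmDiff

lemma Finset.card_symmDiff_add_two_mul_card_inter {α : Type*} [DecidableEq α] (s t : Finset α) :
    #(s ∆ t) + 2 * #(s ∩ t) = #s + #t := by
  have hsub : #(s ∩ t) ≤ #(s ∪ t) := card_le_card (inter_subset_left.trans subset_union_left)
  rw [symmDiff_eq_sup_sdiff_inf, sup_eq_union, inf_eq_inter,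
    card_sdiff_of_subset (inter_subset_left.trans subset_union_left), ← card_union_add_card_inter]
  omega

lemma dominationNumber_le_card {V : Type*} [Fintype V] {G : SimpleGraph V} {D : Finset V}
    (hD : IsDominatingSet G ↑D) : dominationNumber G ≤ #D :=
  Nat.sInf_le ⟨D, hD, rfl⟩

lemma le_dominationNumber {V : Type*} [Fintype V] {G : SimpleGraph V} {m : ℕ}
    (h : ∀ D : Finset V, IsDominatingSet G ↑D → m ≤ #D) : m ≤ dominationNumber G :=
  le_csInf ⟨_, univ, fun v => .inl (mem_univ v), rfl⟩ fun _ ⟨D, hD, hm⟩ => hm ▸ h D hD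

section TwoTokenComplete

variable {V : Type*} [DecidableEq V]

lemma tokenGraph_top_adj_iff {k : ℕ} {A B : {A : Finset V // #A = k}} :
    (tokenGraph ⊤ k).Adj A B ↔ #(A.1 ∆ B.1) = 2 := by
  simp only [tokenGraph, SimpleGraph.top_adj, card_eq_two]

lemma tokenGraph_top_two_adj_iff {A B : {A : Finset V // #A = 2}} :
    (tokenGraph ⊤ 2).Adj A B ↔ A ≠ B ∧ (A.1 ∩ B.1).Nonempty := by
  have hcard := Finset.card_symmDiff_add_two_mul_card_inter A.1 B.1
  have hinter : #(A.1 ∩ B.1) ≤ 2 := (card_le_card inter_subset_left).trans_eq A.2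
  rw [A.2, B.2] at hcard
  rw [tokenGraph_top_adj_iff, Ne, Subtype.ext_iff, ← Ne, ← symmDiff_nonempty,
    ← card_pos, ← card_pos]
  omega

lemma isDominatingSet_tokenGraph_top_two_iff {D : Set {A : Finset V // #A = 2}} :
    IsDominatingSet (tokenGraph ⊤ 2) D ↔
      ∀ A : {A : Finset V // #A = 2}, ∃ B ∈ D, (A.1 ∩ B.1).Nonempty := by
  refine ⟨fun hD A => ?_, fun h A => ?_⟩
  · rcases hD A with hA | ⟨B, hB, hadj⟩
    · exact ⟨A, hA, by simpa using card_pos.1 (by simp [A.2])⟩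
    · exact ⟨B, hB, inter_comm A.1 B.1 ▸ (tokenGraph_top_two_adj_iff.1 hadj).2⟩
  · obtain ⟨B, hB, hmeet⟩ := h A
    by_cases hAB : A = B
    · exact .inl (hAB ▸ hB)
    · exact .inr ⟨B, hB,
        tokenGraph_top_two_adj_iff.2 ⟨Ne.symm hAB, inter_comm A.1 B.1 ▸ hmeet⟩⟩

lemma card_le_two_mul_card_add_one_of_forall_meets [Fintype V]
    {D : Finset {A : Finset V // #A = 2}}
    (h : ∀ A : {A : Finset V // #A = 2}, ∃ B ∈ D, (A.1 ∩ B.1).Nonempty) :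
    Fintype.card V ≤ 2 * #D + 1 := by
  set U := D.biUnion Subtype.val
  have hU : #U ≤ #D * 2 := card_biUnion_le_card_mul D _ 2 fun B _ => B.2.le
  have hUc : #Uᶜ ≤ 1 := by
    by_contra! hlt
    obtain ⟨a, ha, b, hb, hab⟩ := one_lt_card.1 hlt
    obtain ⟨B, hB, c, hc⟩ := h ⟨{a, b}, card_pair hab⟩
    have hcU : c ∈ U := mem_biUnion.2 ⟨B, hB, (mem_inter.1 hc).2⟩
    rcases mem_insert.1 (mem_inter.1 hc).1 with rfl | hcb
    · exact mem_compl.1 ha hcU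
    · exact mem_compl.1 hb (mem_singleton.1 hcb ▸ hcU)
  have := card_add_card_compl U
  omega

end TwoTokenComplete

def consecutivePair (n : ℕ) (i : Fin (n / 2)) : {A : Finset (Fin n) // #A = 2} :=
  ⟨{⟨2 * i, by omega⟩, ⟨2 * i + 1, by omega⟩}, card_pair (by simp [Fin.ext_iff])⟩

lemma mem_consecutivePair {n : ℕ} {i : Fin (n / 2)} {x : Fin n} :
    x ∈ (consecutivePair n i).1 ↔ x.val / 2 = i.val := by
  simp only [consecutivePair, mem_insert, mem_singleton, Fin.ext_iff]
  omega

lemma consecutivePair_injective (n : ℕ) : Function.Injective (consecutivePair n) := by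
  intro i j hij
  have hmem : (⟨2 * i, by omega⟩ : Fin n) ∈ (consecutivePair n i).1 :=
    mem_consecutivePair.2 (by simp)
  rw [hij, mem_consecutivePair] at hmem
  exact Fin.ext (by simpa using hmem)

/-- The smaller point of a pair is not `n - 1`, so it lies in a consecutive pair. -/
lemma exists_consecutivePair_meets {n : ℕ} (A : {A : Finset (Fin n) // #A = 2}) :
    ∃ i, (A.1 ∩ (consecutivePair n i).1).Nonempty := by
  obtain ⟨x, y, hxy, hA⟩ := card_eq_two.1 A.2
  have hxy' : x.val ≠ y.val := Fin.val_ne_of_ne hxy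
  obtain ⟨z, hzA, hz⟩ : ∃ z ∈ A.1, z.val + 1 < n := by
    have := x.isLt
    have := y.isLt
    rcases lt_or_gt_of_ne hxy' with h | h
    exacts [⟨x, by simp [hA], by omega⟩, ⟨y, by simp [hA], by omega⟩]
  exact ⟨⟨z.val / 2, by omega⟩, z, mem_inter.2 ⟨hzA, mem_consecutivePair.2 rfl⟩⟩

def consecutivePairs (n : ℕ) : Finset {A : Finset (Fin n) // #A = 2} :=
  univ.image (consecutivePair n)

lemma card_consecutivePairs (n : ℕ) : #(consecutivePairs n) = n / 2 := by
  simp [consecutivePairs, card_image_of_injective _ (consecutivePair_injective n)]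

lemma isDominatingSet_consecutivePairs (n : ℕ) :
    IsDominatingSet (tokenGraph (⊤ : SimpleGraph (Fin n)) 2) ↑(consecutivePairs n) :=
  isDominatingSet_tokenGraph_top_two_iff.2 fun A =>
    have ⟨i, hi⟩ := exists_consecutivePair_meets A
    ⟨consecutivePair n i, by simp [consecutivePairs], hi⟩

theorem domination_two_token_complete_general (n : ℕ) :
    dominationNumber (tokenGraph (⊤ : SimpleGraph (Fin n)) 2) = n / 2 := by
  refine le_antisymm ?_ (le_dominationNumber fun D hD => ?_)
  · exact card_consecutivePairs n ▸ dominationNumber_le_card (isDominatingSet_consecutivePairs n)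
  · have hcard :=
      card_le_two_mul_card_add_one_of_forall_meets (isDominatingSet_tokenGraph_top_two_iff.1 hD)
    rw [Fintype.card_fin] at hcard
    omega

/-- For every integer `n ≥ 2`, the domination number of the 2-token graph of
the complete graph satisfies `γ(F₂(Kₙ)) = ⌊n/2⌋`. -/
theorem domination_two_token_complete (n : ℕ) (hn : 2 ≤ n) :
    dominationNumber (tokenGraph (⊤ : SimpleGraph (Fin n)) 2) = n / 2 :=
  domination_two_token_complete_general n
end

section
/- Let n ≥ 3. If n is even, then 12·γ(F_3(K_n)) ≥ n² − 2n, i.e., γ(F_3(K_n)) ≥ n²/12 − n/6. If n is odd, then 12·γ(F_3(K_n)) ≥ n² − 2n + 3, i.e., γ(F_3(K_n)) ≥ n²/12 − n/6 + 1/4. -/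
/-! Let `D` be a dominating set of `F₃(Kₙ)` and call a pair of vertices covered when it lies in a
triple of `D`. A triple dominated by `A ∈ D` shares two points with `A`, so every triple contains a
covered pair: the uncovered pairs form a triangle-free graph `H`, and Mantel's theorem gives
`4 e(H) ≤ n²`. At most `3 |D|` pairs are covered, so `6 |D| ≥ n (n - 1) - n² / 2`.

For `n = 2t + 1` this reads `3 |D| ≥ t²`. In the equality case each vertex `v` has covered degree
exactly twice the number of triples of `D` through it, so every degree of `H` is even. Adjacent
vertices of a triangle-free graph have disjoint neighbourhoods, so `d(u) + d(v) ≤ n`, hence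
`≤ n - 1` by parity. As `∑_{uv ∈ E} (d(u) + d(v)) = ∑_v d(v)²`, Cauchy–Schwarz then gives
`4 e(H) ≤ n (n - 1)`, fewer edges than the equality case requires. -/

open Finset

theorem Nat.two_mul_choose_two_add_self (n : ℕ) : 2 * n.choose 2 + n = n ^ 2 := by
  induction n with
  | zero => rfl
  | succ n ih =>
    rw [Nat.choose_succ_succ', Nat.choose_one_right]
    linear_combination ih

namespace SimpleGraph

variable {V : Type*} [Fintype V] {G : SimpleGraph V} [DecidableRel G.Adj]

theorem sum_degree_dart_fst : ∑ d : G.Dart, G.degree d.fst = ∑ v, G.degree v ^ 2 := by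
  have := Classical.decEq V
  rw [← sum_fiberwise univ fun d : G.Dart => d.fst]
  refine sum_congr rfl fun v _ => ?_
  rw [sum_congr rfl fun d hd => by rw [(mem_filter.1 hd).2], sum_const, smul_eq_mul,
    dart_fst_fiber_card_eq_degree, sq]

theorem four_mul_card_edgeFinset_le_of_degree_add_degree_le {c : ℕ}
    (h : ∀ u v, G.Adj u v → G.degree u + G.degree v ≤ c) :
    4 * #G.edgeFinset ≤ Fintype.card V * c := by
  set e := #G.edgeFinset
  have hsnd : ∑ d : G.Dart, G.degree d.snd = ∑ v, G.degree v ^ 2 := by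
    rw [← sum_degree_dart_fst]
    exact Fintype.sum_equiv Dart.symm_involutive.toPerm _ _ fun _ => rfl
  have hsq : 2 * ∑ v, G.degree v ^ 2 ≤ 2 * (e * c) :=
    calc 2 * ∑ v, G.degree v ^ 2 = ∑ d : G.Dart, (G.degree d.fst + G.degree d.snd) := by
          rw [sum_add_distrib, sum_degree_dart_fst, hsnd, two_mul]
      _ ≤ ∑ _d : G.Dart, c := sum_le_sum fun d _ => h _ _ d.adj
      _ = 2 * (e * c) := by
          rw [sum_const, card_univ, dart_card_eq_twice_card_edges, smul_eq_mul, mul_assoc]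
  have hcs : (2 * e) ^ 2 ≤ Fintype.card V * (e * c) := by
    rw [← sum_degrees_eq_twice_card_edges]
    exact sq_sum_le_card_mul_sum_sq.trans (Nat.mul_le_mul_left _ (by omega))
  rcases Nat.eq_zero_or_pos e with he | he
  · simp [he]
  · exact Nat.le_of_mul_le_mul_right (by nlinarith) he

theorem card_edgeFinset_add_card_edgeFinset_compl [DecidableEq V] :
    #G.edgeFinset + #Gᶜ.edgeFinset = (Fintype.card V).choose 2 := by
  rw [← card_union_of_disjoint (G.disjoint_edgeFinset.2 disjoint_compl_right),
    ← edgeFinset_sup, ← card_edgeFinset_top_eq_card_choose_two]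
  congr! 2
  exact sup_compl_eq_top

namespace CliqueFree

theorem four_mul_card_edgeFinset_le_sq (hG : G.CliqueFree 3) :
    4 * #G.edgeFinset ≤ Fintype.card V ^ 2 := by
  have := hG.card_edgeFinset_le (r := 2)
  rcases Nat.mod_two_eq_zero_or_one (Fintype.card V) with h | h <;> simp [h] at this <;> omega

theorem degree_add_degree_le [DecidableEq V] (hG : G.CliqueFree 3) {u v : V} (huv : G.Adj u v) :
    G.degree u + G.degree v ≤ Fintype.card V := by
  rw [← card_neighborFinset_eq_degree, ← card_neighborFinset_eq_degree,
    ← card_union_of_disjoint]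
  · exact card_le_univ _
  · refine Finset.disjoint_left.2 fun w hu hv => ?_
    rw [mem_neighborFinset] at hu hv
    exact hG {u, v, w} (is3Clique_triple_iff.2 ⟨huv, hu, hv⟩)

theorem four_mul_card_edgeFinset_le_of_even_degree [DecidableEq V] (hG : G.CliqueFree 3)
    (hV : Odd (Fintype.card V)) (hdeg : ∀ v, Even (G.degree v)) :
    4 * #G.edgeFinset ≤ Fintype.card V * (Fintype.card V - 1) := by
  refine four_mul_card_edgeFinset_le_of_degree_add_degree_le fun u v huv => ?_
  have := hG.degree_add_degree_le huv
  obtain ⟨a, ha⟩ := hdeg u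
  obtain ⟨b, hb⟩ := hdeg v
  obtain ⟨t, ht⟩ := hV
  omega

end CliqueFree

end SimpleGraph

variable {V : Type*} [DecidableEq V]

theorem card_inter_add_one_of_tokenGraph_adj {G : SimpleGraph V} {k : ℕ}
    {A B : {A : Finset V // A.card = k}} (h : (tokenGraph G k).Adj A B) :
    #(A.1 ∩ B.1) + 1 = k := by
  obtain ⟨u, v, huv, hAB⟩ := h
  have hsymm : #(A.1 \ B.1) + #(B.1 \ A.1) = 2 := by
    rw [← card_union_of_disjoint disjoint_sdiff_sdiff, ← sup_eq_union, ← symmDiff_def, hAB,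
      card_pair huv.ne]
  have hA := card_sdiff_add_card_inter A.1 B.1
  have hB := card_sdiff_add_card_inter B.1 A.1
  rw [A.2] at hA
  rw [inter_comm, B.2] at hB
  omega

theorem IsDominatingSet.exists_le_card_inter_add_one {G : SimpleGraph V} {k : ℕ}
    {D : Finset {A : Finset V // A.card = k}} (hD : IsDominatingSet (tokenGraph G k) ↑D)
    (B : {A : Finset V // A.card = k}) : ∃ A ∈ D, k ≤ #(A.1 ∩ B.1) + 1 := by
  rcases hD B with hB | ⟨A, hA, hAB⟩
  · exact ⟨B, hB, by rw [inter_self, B.2]; omega⟩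
  · exact ⟨A, hA, (card_inter_add_one_of_tokenGraph_adj hAB).ge⟩

def coveredGraph {k : ℕ} (D : Finset {A : Finset V // A.card = k}) : SimpleGraph V where
  Adj u v := u ≠ v ∧ ∃ A ∈ D, u ∈ A.1 ∧ v ∈ A.1
  symm := ⟨fun _ _ ⟨huv, A, hA, hu, hv⟩ => ⟨huv.symm, A, hA, hv, hu⟩⟩
  loopless := ⟨fun _ h => h.1 rfl⟩

instance {k : ℕ} (D : Finset {A : Finset V // A.card = k}) :
    DecidableRel (coveredGraph D).Adj :=
  fun u v => inferInstanceAs (Decidable (u ≠ v ∧ ∃ A ∈ D, u ∈ A.1 ∧ v ∈ A.1))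

theorem IsDominatingSet.cliqueFree_compl_coveredGraph {G : SimpleGraph V}
    {D : Finset {A : Finset V // A.card = 3}} (hD : IsDominatingSet (tokenGraph G 3) ↑D) :
    (coveredGraph D)ᶜ.CliqueFree 3 := by
  intro s hs
  obtain ⟨A, hA, hAs⟩ := hD.exists_le_card_inter_add_one ⟨s, hs.card_eq⟩
  change 3 ≤ #(A.1 ∩ s) + 1 at hAs
  obtain ⟨u, hu, v, hv, huv⟩ := one_lt_card.1 (show 1 < #(A.1 ∩ s) by omega)
  rw [mem_inter] at hu hv
  exact (hs.1 hu.2 hv.2 huv).2 ⟨huv, A, hA, hu.1, hv.1⟩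

section coveredGraph

variable [Fintype V] {k : ℕ} (D : Finset {A : Finset V // A.card = k})

theorem degree_coveredGraph_le (v : V) :
    (coveredGraph D).degree v ≤ (k - 1) * #{A ∈ D | v ∈ A.1} := by
  have hsub : (coveredGraph D).neighborFinset v ⊆ {A ∈ D | v ∈ A.1}.biUnion (·.1.erase v) := by
    intro w hw
    obtain ⟨hvw, A, hA, hv, hw⟩ := (SimpleGraph.mem_neighborFinset _ _ _).1 hw
    exact mem_biUnion.2 ⟨A, mem_filter.2 ⟨hA, hv⟩, mem_erase.2 ⟨hvw.symm, hw⟩⟩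
  calc (coveredGraph D).degree v ≤ ∑ A ∈ {A ∈ D | v ∈ A.1}, #(A.1.erase v) :=
        (card_le_card hsub).trans card_biUnion_le
    _ = (k - 1) * #{A ∈ D | v ∈ A.1} := by
        rw [sum_congr rfl fun A hA => by rw [card_erase_of_mem (mem_filter.1 hA).2, A.2],
          sum_const, smul_eq_mul, mul_comm]

theorem sum_card_filter_mem : ∑ v, #{A ∈ D | v ∈ A.1} = k * #D := by
  have := sum_card_bipartiteAbove_eq_sum_card_bipartiteBelow
    (fun v (A : {A : Finset V // A.card = k}) => v ∈ A.1) (s := univ) (t := D)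
  simp only [bipartiteAbove, bipartiteBelow, filter_mem_eq_inter, univ_inter] at this
  rw [this, sum_congr rfl fun A _ => A.2, sum_const, smul_eq_mul, mul_comm]

theorem two_mul_card_edgeFinset_coveredGraph_le :
    2 * #(coveredGraph D).edgeFinset ≤ (k - 1) * (k * #D) := by
  rw [← SimpleGraph.sum_degrees_eq_twice_card_edges, ← sum_card_filter_mem, mul_sum]
  exact sum_le_sum fun v _ => degree_coveredGraph_le D v

theorem degree_coveredGraph_eq_of_two_mul_card_edgeFinset_eq
    (h : 2 * #(coveredGraph D).edgeFinset = (k - 1) * (k * #D)) (v : V) :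
    (coveredGraph D).degree v = (k - 1) * #{A ∈ D | v ∈ A.1} := by
  rw [← SimpleGraph.sum_degrees_eq_twice_card_edges, ← sum_card_filter_mem, mul_sum] at h
  exact (sum_eq_sum_iff_of_le fun v _ => degree_coveredGraph_le D v).1 h v (mem_univ v)

end coveredGraph

namespace IsDominatingSet

variable [Fintype V] {G : SimpleGraph V} {D : Finset {A : Finset V // A.card = 3}}

theorem sq_sub_two_mul_le_twelve_mul_card (hD : IsDominatingSet (tokenGraph G 3) ↑D) :
    Fintype.card V ^ 2 - 2 * Fintype.card V ≤ 12 * #D := by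
  have hcovered := two_mul_card_edgeFinset_coveredGraph_le D
  have hmantel := hD.cliqueFree_compl_coveredGraph.four_mul_card_edgeFinset_le_sq
  have hpairs := SimpleGraph.card_edgeFinset_add_card_edgeFinset_compl (G := coveredGraph D)
  have := Nat.two_mul_choose_two_add_self (Fintype.card V)
  omega

theorem sq_sub_two_mul_add_three_le_twelve_mul_card (hD : IsDominatingSet (tokenGraph G 3) ↑D)
    (hV : Odd (Fintype.card V)) (h3 : 3 ≤ Fintype.card V) :
    Fintype.card V ^ 2 - 2 * Fintype.card V + 3 ≤ 12 * #D := by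
  have hcovered := two_mul_card_edgeFinset_coveredGraph_le D
  have hmantel := hD.cliqueFree_compl_coveredGraph.four_mul_card_edgeFinset_le_sq
  have hpairs := SimpleGraph.card_edgeFinset_add_card_edgeFinset_compl (G := coveredGraph D)
  have := Nat.two_mul_choose_two_add_self (Fintype.card V)
  obtain ⟨t, ht⟩ := hV
  have hsq : Fintype.card V ^ 2 = 4 * t ^ 2 + 4 * t + 1 := by rw [ht]; ring
  have hpred : Fintype.card V * (Fintype.card V - 1) = 4 * t ^ 2 + 2 * t := by
    rw [ht, Nat.add_sub_cancel]; ring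
  by_contra hlt
  -- Otherwise `3 |D| = t²` and every triple of `D` contributes three distinct covered pairs.
  have htight : 2 * #(coveredGraph D).edgeFinset = (3 - 1) * (3 * #D) := by omega
  have heven (v : V) : Even ((coveredGraph D)ᶜ.degree v) := by
    rw [SimpleGraph.degree_compl, degree_coveredGraph_eq_of_two_mul_card_edgeFinset_eq D htight v]
    exact ⟨t - #{A ∈ D | v ∈ A.1}, by omega⟩
  have := hD.cliqueFree_compl_coveredGraph.four_mul_card_edgeFinset_le_of_even_degree
    ⟨t, ht⟩ heven
  omega

end IsDominatingSet

theorem exists_isDominatingSet_card_eq_dominationNumber {V : Type*} [Fintype V]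
    (G : SimpleGraph V) : ∃ D : Finset V, IsDominatingSet G ↑D ∧ D.card = dominationNumber G :=
  Nat.sInf_mem (s := {m | ∃ D : Finset V, IsDominatingSet G ↑D ∧ D.card = m})
    ⟨_, univ, fun v => Or.inl (mem_coe.2 (mem_univ v)), rfl⟩

/-- Lower bounds for `γ(F₃(Kₙ))`: if `n` is even then
`12·γ(F₃(Kₙ)) ≥ n² - 2n`, and if `n` is odd then `12·γ(F₃(Kₙ)) ≥ n² - 2n + 3`. -/
theorem domination_three_token_complete_lower (n : ℕ) (hn : 3 ≤ n) :
    (Even n → n ^ 2 - 2 * n ≤ 12 * dominationNumber (tokenGraph (⊤ : SimpleGraph (Fin n)) 3)) ∧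
    (Odd n → n ^ 2 - 2 * n + 3 ≤
      12 * dominationNumber (tokenGraph (⊤ : SimpleGraph (Fin n)) 3)) := by
  obtain ⟨D, hD, hcard⟩ :=
    exists_isDominatingSet_card_eq_dominationNumber (tokenGraph (⊤ : SimpleGraph (Fin n)) 3)
  have hV : Fintype.card (Fin n) = n := Fintype.card_fin n
  rw [← hcard]
  refine ⟨fun _ => ?_, fun hodd => ?_⟩
  · simpa [hV] using hD.sq_sub_two_mul_le_twelve_mul_card
  · simpa [hV] using hD.sq_sub_two_mul_add_three_le_twelve_mul_card (by rwa [hV]) (by rwa [hV])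
end
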